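/- arXiv:1606.02541 — 2 statements merged into one kernel-verified Lean document; each statement's English description precedes it below -/
import Mathlib

section
/- Let C be an MRD code in F_q^{m×n} (m ≤ n) with minimum distance d and containing the zero matrix. Then for every ℓ with 0 ≤ ℓ ≤ m − d there exists a matrix in C of rank exactly d + ℓ. -/
/-!
Read a matrix as a linear map `Fⁿ → Fᵐ`. For a subspace `U ≤ Fᵐ` of dimension `d - 1`, the map
`f ↦ (Fᵐ → Fᵐ ⧸ U) ∘ f` is injective on `C`, since the difference of two codewords it identifies
has column space inside `U` and hence rank `< d`. Both sides have `q^{n(m-d+1)}` elements, so it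
is a bijection from `C` onto `Hom(Fⁿ, Fᵐ ⧸ U)`, and counting in the target shows that for
`U ≤ V` exactly `q^{n(dim V - d + 1)}` codewords have column space inside `V`.

Now fix `V` with `dim V = d + ℓ`. A codeword whose column space is a proper subspace of `V` lies
in `ker φ` for one of the `q^{d+ℓ} - 1` nonzero functionals `φ` on `V`, and each such hyperplane
holds `q^{nℓ}` codewords. Since `q^{d+ℓ} - 1 < q^n`, these account for fewer than `q^{n(ℓ+1)}`
codewords, so some codeword has column space exactly `V`.
-/

open Module Submodule
open LinearMap (range ker)

section

variable {F : Type*} [Field F] {E K : Type*} [AddCommGroup E] [Module F E]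
  [AddCommGroup K] [Module F K]

theorem Submodule.exists_le_finrank_eq (V : Submodule F K) {k : ℕ} (hk : k ≤ finrank F V) :
    ∃ U ≤ V, finrank F U = k := by
  obtain ⟨v, hv⟩ := exists_linearIndependent_of_le_finrank hk
  refine ⟨(span F (Set.range v)).map V.subtype, map_subtype_le _ _, ?_⟩
  rw [finrank_map_subtype_eq, finrank_span_eq_card hv, Fintype.card_fin]

theorem LinearMap.range_le_iff_range_mkQ_comp_le {U V : Submodule F K} (h : U ≤ V)
    (f : E →ₗ[F] K) : range f ≤ V ↔ range (U.mkQ ∘ₗ f) ≤ V.map U.mkQ := by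
  rw [range_comp, map_le_iff_le_comap, comap_map_mkQ, sup_eq_right.mpr h]

theorem Submodule.exists_dual_ne_zero_le_map_ker {P V : Submodule F K} (hle : P ≤ V)
    (hne : P ≠ V) : ∃ φ : Dual F V, φ ≠ 0 ∧ P ≤ (ker φ).map V.subtype := by
  have hlt : P.comap V.subtype < ⊤ :=
    lt_top_iff_ne_top.mpr fun htop => hne (le_antisymm hle (comap_subtype_eq_top.mp htop))
  obtain ⟨φ, hφ, hker⟩ := exists_le_ker_of_lt_top _ hlt
  refine ⟨φ, hφ, ?_⟩
  calc P = (P.comap V.subtype).map V.subtype := by rw [map_comap_subtype, inf_eq_right.mpr hle]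
    _ ≤ (ker φ).map V.subtype := map_mono hker

variable [FiniteDimensional F K]

theorem Submodule.finrank_map_mkQ_of_le {U V : Submodule F K} (h : U ≤ V) :
    finrank F (V.map U.mkQ) = finrank F V - finrank F U := by
  have hnullity := (U.mkQ.domRestrict V).finrank_range_add_finrank_ker
  rw [LinearMap.range_domRestrict, LinearMap.ker_domRestrict, ker_mkQ,
    (comapSubtypeEquivOfLe h).finrank_eq] at hnullity
  omega

theorem injOn_mkQ_comp_of_finrank_lt {d : ℕ} {C : Set (E →ₗ[F] K)}
    (hdist : ∀ f ∈ C, ∀ g ∈ C, f ≠ g → d ≤ finrank F (range (f - g)))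
    {U : Submodule F K} (hU : finrank F U < d) : Set.InjOn (U.mkQ ∘ₗ ·) C := by
  intro f hf g hg hfg
  by_contra hne
  have hle : range (f - g) ≤ U := by
    rw [← ker_mkQ U, LinearMap.range_le_ker_iff, LinearMap.comp_sub, sub_eq_zero]
    exact hfg
  have := finrank_mono hle
  have := hdist f hf g hg hne
  omega

variable [FiniteDimensional F E]

theorem ncard_setOf_range_le (P : Submodule F K) :
    {g : E →ₗ[F] K | range g ≤ P}.ncard = Nat.card F ^ (finrank F E * finrank F P) := by
  let e : {g : E →ₗ[F] K | range g ≤ P} ≃ (E →ₗ[F] P) :=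
    { toFun g := g.1.codRestrict P fun x => g.2 (LinearMap.mem_range_self _ x)
      invFun h :=
        ⟨P.subtype ∘ₗ h, (LinearMap.range_comp_le_range h P.subtype).trans_eq P.range_subtype⟩
      left_inv _ := rfl
      right_inv _ := rfl }
  rw [← Nat.card_coe_set_eq, Nat.card_congr e, natCard_eq_pow_finrank (K := F),
    finrank_linearMap]

variable [Finite F] {d : ℕ} {C : Set (E →ₗ[F] K)}
  (hdist : ∀ f ∈ C, ∀ g ∈ C, f ≠ g → d ≤ finrank F (range (f - g)))
include hdist

theorem ncard_range_le_of_ncard_eq {U V : Submodule F K} (hU : finrank F U < d) (hUV : U ≤ V)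
    (hC : C.ncard = Nat.card (E →ₗ[F] K ⧸ U)) :
    {f ∈ C | range f ≤ V}.ncard = Nat.card F ^ (finrank F E * (finrank F V - finrank F U)) := by
  set Φ : (E →ₗ[F] K) → (E →ₗ[F] K ⧸ U) := (U.mkQ ∘ₗ ·)
  have : Finite (E →ₗ[F] K ⧸ U) := Module.finite_of_finite F
  have hinj : Set.InjOn Φ C := injOn_mkQ_comp_of_finrank_lt hdist hU
  have hsurj : Φ '' C = Set.univ :=
    Set.eq_of_subset_of_ncard_le (Set.subset_univ _)
      (by rw [hinj.ncard_image, Set.ncard_univ, hC])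
  have hpre : {f ∈ C | range f ≤ V} = C ∩ Φ ⁻¹' {g | range g ≤ V.map U.mkQ} := by
    ext f
    simp [LinearMap.range_le_iff_range_mkQ_comp_le hUV, Φ]
  rw [hpre, ← (hinj.mono Set.inter_subset_left).ncard_image, Set.image_inter_preimage, hsurj,
    Set.univ_inter, ncard_setOf_range_le, finrank_map_mkQ_of_le hUV]

theorem ncard_range_le_of_mrd
    (hC : C.ncard = Nat.card F ^ (finrank F E * (finrank F K - d + 1))) (hd : 0 < d)
    (hdK : d ≤ finrank F K) {V : Submodule F K} (hV : d ≤ finrank F V + 1) :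
    {f ∈ C | range f ≤ V}.ncard = Nat.card F ^ (finrank F E * (finrank F V + 1 - d)) := by
  obtain ⟨U, hUV, hU⟩ := V.exists_le_finrank_eq (k := d - 1) (by omega)
  have hCU : C.ncard = Nat.card (E →ₗ[F] K ⧸ U) := by
    rw [hC, natCard_eq_pow_finrank (K := F) (V := E →ₗ[F] K ⧸ U), finrank_linearMap,
      finrank_quotient, hU]
    congr 2
    omega
  rw [ncard_range_le_of_ncard_eq hdist (by omega) hUV hCU, hU]
  congr 2
  omega

theorem exists_mem_range_eq_of_mrd
    (hC : C.ncard = Nat.card F ^ (finrank F E * (finrank F K - d + 1))) (hd : 0 < d)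
    {V : Submodule F K} (hdV : d ≤ finrank F V) (hVE : finrank F V ≤ finrank F E) :
    ∃ f ∈ C, range f = V := by
  classical
  by_contra! hnone
  set q := Nat.card F
  set n := finrank F E
  set r := finrank F V
  have hdK : d ≤ finrank F K := hdV.trans V.finrank_le
  have : Finite (E →ₗ[F] K) := Module.finite_of_finite F
  have : Finite (Dual F V) := Module.finite_of_finite F
  have := Fintype.ofFinite (Dual F V)
  set H : Dual F V → Submodule F K := fun φ => (ker φ).map V.subtype
  have hcover : {f ∈ C | range f ≤ V} ⊆
      ⋃ φ ∈ Finset.univ.erase (0 : Dual F V), {f ∈ C | range f ≤ H φ} := by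
    rintro f ⟨hfC, hfV⟩
    obtain ⟨φ, hφ, hfφ⟩ := exists_dual_ne_zero_le_map_ker hfV (hnone f hfC)
    exact Set.mem_biUnion (Finset.mem_erase.mpr ⟨hφ, Finset.mem_univ φ⟩) ⟨hfC, hfφ⟩
  have hH : ∀ φ ∈ Finset.univ.erase (0 : Dual F V),
      {f ∈ C | range f ≤ H φ}.ncard = q ^ (n * (r - d)) := by
    intro φ hφ
    have hrank : finrank F (H φ) + 1 = r := by
      rw [finrank_map_subtype_eq,
        Dual.finrank_ker_add_one_of_ne_zero (Finset.ne_of_mem_erase hφ)]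
    rw [ncard_range_le_of_mrd hdist hC hd hdK (by omega), hrank]
  have hcard : (Finset.univ.erase (0 : Dual F V)).card = q ^ r - 1 := by
    rw [Finset.card_erase_of_mem (Finset.mem_univ _), Finset.card_univ,
      ← Nat.card_eq_fintype_card, natCard_eq_pow_finrank (K := F), finrank_linearMap_self]
  have hq : 1 < q := Finite.one_lt_card
  have hlt : q ^ r - 1 < q ^ n := by
    have := Nat.pow_le_pow_right hq.le hVE
    have := Nat.one_le_pow r q (by omega)
    omega
  have := calc q ^ (n * (r + 1 - d))
      = {f ∈ C | range f ≤ V}.ncard := (ncard_range_le_of_mrd hdist hC hd hdK (by omega)).symm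
    _ ≤ ∑ φ ∈ Finset.univ.erase (0 : Dual F V), {f ∈ C | range f ≤ H φ}.ncard :=
        (Set.ncard_le_ncard hcover).trans (Finset.set_ncard_biUnion_le _ _)
    _ = (q ^ r - 1) * q ^ (n * (r - d)) := by
        rw [Finset.sum_congr rfl hH, Finset.sum_const, hcard, smul_eq_mul]
    _ < q ^ n * q ^ (n * (r - d)) := Nat.mul_lt_mul_of_pos_right hlt (Nat.pow_pos (by omega))
    _ = q ^ (n * (r + 1 - d)) := by rw [← pow_add, Nat.sub_add_comm hdV]; ring_nf
  exact lt_irrefl _ this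

end

theorem Matrix.rank_eq_zero_iff {F : Type*} [Field F] {m n : Type*} [Fintype n]
    {A : Matrix m n F} : A.rank = 0 ↔ A = 0 := by
  classical
  rw [Matrix.rank, finrank_eq_zero, LinearMap.range_eq_bot, ← Matrix.toLin'_apply',
    LinearEquiv.map_eq_zero_iff]

theorem mrd_all_weights_general {q m n d : ℕ} {F : Type*} [Field F] [Fintype F]
    (hq : Fintype.card F = q)
    (C : Set (Matrix (Fin m) (Fin n) F)) (hmn : m ≤ n)
    (hdist : ∀ A ∈ C, ∀ B ∈ C, A ≠ B → d ≤ (A - B).rank)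
    (hattain : ∃ A ∈ C, ∃ B ∈ C, A ≠ B ∧ (A - B).rank = d)
    (hMRD : C.ncard = q ^ (n * (m - d + 1))) :
    ∀ ℓ : ℕ, ℓ ≤ m - d → ∃ M ∈ C, M.rank = d + ℓ := by
  intro ℓ hℓ
  have hdist' : ∀ f ∈ Matrix.toLin' '' C, ∀ g ∈ Matrix.toLin' '' C, f ≠ g →
      d ≤ finrank F (range (f - g)) := by
    rintro _ ⟨A, hA, rfl⟩ _ ⟨B, hB, rfl⟩ hAB
    rw [← map_sub]
    exact hdist A hA B hB (ne_of_apply_ne _ hAB)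
  have hC' : (Matrix.toLin' '' C).ncard =
      Nat.card F ^ (finrank F (Fin n → F) * (finrank F (Fin m → F) - d + 1)) := by
    rw [Set.ncard_image_of_injective _ Matrix.toLin'.injective, hMRD, ← hq,
      Nat.card_eq_fintype_card, finrank_fin_fun, finrank_fin_fun]
  obtain ⟨A, -, B, -, hAB, hrank⟩ := hattain
  have hd : 0 < d :=
    hrank ▸ Nat.pos_of_ne_zero (mt Matrix.rank_eq_zero_iff.mp (sub_ne_zero.mpr hAB))
  have hdm : d ≤ m := hrank ▸ (A - B).rank_le_height
  obtain ⟨V, -, hV⟩ := (⊤ : Submodule F (Fin m → F)).exists_le_finrank_eq (k := d + ℓ)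
    (by rw [finrank_top, finrank_fin_fun]; omega)
  obtain ⟨_, ⟨M, hM, rfl⟩, hMV⟩ := exists_mem_range_eq_of_mrd hdist' hC' hd (V := V)
    (by omega) (by rw [finrank_fin_fun]; omega)
  refine ⟨M, hM, ?_⟩
  rw [← hV, ← hMV]
  rfl

/-- Let `C` be an MRD code in `F_q^{m×n}` (`m ≤ n`) with minimum distance
`d`, containing the zero matrix. For every `0 ≤ ℓ ≤ m − d` there exists a matrix in `C` of
rank exactly `d + ℓ`. -/
theorem mrd_all_weights {q m n d : ℕ} {F : Type*} [Field F] [Fintype F]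
    (hq : Fintype.card F = q)
    (C : Set (Matrix (Fin m) (Fin n) F)) (hmn : m ≤ n)
    (h0 : (0 : Matrix (Fin m) (Fin n) F) ∈ C)
    (hdist : ∀ A ∈ C, ∀ B ∈ C, A ≠ B → d ≤ (A - B).rank)
    (hattain : ∃ A ∈ C, ∃ B ∈ C, A ≠ B ∧ (A - B).rank = d)
    (hMRD : C.ncard = q ^ (n * (m - d + 1))) :
    ∀ ℓ : ℕ, ℓ ≤ m - d → ∃ M ∈ C, M.rank = d + ℓ :=
  mrd_all_weights_general hq C hmn hdist hattain hMRD
end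

section
/- Let G_{k,s} = {a_0 x + a_1 x^{q^s} + ... + a_{k−1} x^{q^{s(k−1)}} : a_i ∈ F_{q^n}} with gcd(s,n) = 1 and 2 ≤ k ≤ n−2. Then the middle nucleus {φ ∈ End_{F_q}(F_{q^n}) : f ∘ φ ∈ G_{k,s} for all f ∈ G_{k,s}} and the right nucleus {φ : φ ∘ f ∈ G_{k,s} for all f ∈ G_{k,s}} are both isomorphic to F_{q^n} (acting by scalar multiplication x ↦ dx). -/
/-- The generalized Gabidulin code `G_{k,s}` as a set of `q`-polynomial maps on
`L = F_{q^n}`. -/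
def genGabidulin {L : Type*} [Field L] (q k s : ℕ) : Set (L → L) :=
  {f | ∃ a : Fin k → L, f = fun x => ∑ i : Fin k, a i * x ^ q ^ (s * (i : ℕ))}

/-- `φ` is an `F_q`-linear endomorphism of `L = F_{q^n}`. -/
def IsQEnd {L : Type*} [Field L] (q : ℕ) (φ : L → L) : Prop :=
  (∀ x y : L, φ (x + y) = φ x + φ y) ∧ (∀ c x : L, c ^ q = c → φ (c * x) = c * φ x)

/-!
Both nuclei contain the scalar multiplications, and both contain only elements of `G_{k,s}`,
since `x` is a codeword. Write such an element as `φ = ∑ aᵢ x^{q^{si}}`. Composing `φ` with the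
codeword `x^{q^{sj}}`, `j = k - i₀`, on the appropriate side shifts the exponents of `φ` by `sj`,
so `x^{q^{sk}}` appears with coefficient `a_{i₀}` (or a power of it). As `gcd(s, n) = 1` and
`k < n`, the exponents `q^{sk}` and `q^{sm}` (`m < k`) are distinct modulo `q^n - 1`, and the
monomials `x^{q^r}`, `r < n`, are linearly independent as functions on `F_{q^n}`, so `a_{i₀} = 0`.
Hence `φ = a₀ x`.
-/

open Polynomial

section FiniteField

variable {L : Type*} [Field L] [Fintype L] {q n : ℕ}

lemma one_lt_of_card_eq_pow (hcard : Fintype.card L = q ^ n) : 1 < q := by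
  by_contra! hq
  have := Fintype.one_lt_card (α := L)
  rw [hcard] at this
  exact this.not_ge (pow_le_one' hq n)

lemma exists_eq_ringChar_pow_of_card_eq_pow (hcard : Fintype.card L = q ^ n) (hn : n ≠ 0) :
    ∃ e, q = ringChar L ^ e := by
  obtain ⟨m, hp, hm⟩ := FiniteField.card L (ringChar L)
  obtain ⟨e, -, rfl⟩ := (Nat.dvd_prime_pow hp).1 (hm ▸ hcard ▸ dvd_pow_self q hn)
  exact ⟨e, rfl⟩

lemma sum_pow_pow_of_card_eq_pow (hcard : Fintype.card L = q ^ n) (hn : n ≠ 0)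
    {ι : Type*} (s : Finset ι) (u : ι → L) (m : ℕ) :
    (∑ i ∈ s, u i) ^ q ^ m = ∑ i ∈ s, u i ^ q ^ m := by
  obtain ⟨e, rfl⟩ := exists_eq_ringChar_pow_of_card_eq_pow hcard hn
  have := ringChar.charP L
  have : ExpChar L (ringChar L) := ExpChar.prime (CharP.char_is_prime L _)
  simp only [← pow_mul]
  exact sum_pow_char_pow (ringChar L) _ s u

lemma pow_pow_mod_of_card_eq_pow (hcard : Fintype.card L = q ^ n) (x : L) (m : ℕ) :
    x ^ q ^ (m % n) = x ^ q ^ m := by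
  conv_rhs => rw [← Nat.mod_add_div m n, pow_add, pow_mul, pow_mul, ← hcard,
    FiniteField.pow_card_pow]

/-- The polynomial with exponents reduced modulo `n` vanishes on all of `L` and has degree
below `q ^ n = |L|`, so it is zero. -/
lemma eq_zero_of_sum_mul_pow_pow_eq_zero (hcard : Fintype.card L = q ^ n) (hn : 0 < n)
    {ι : Type*} [Fintype ι] {c : ι → L} {e : ι → ℕ} (h : ∀ x, ∑ i, c i * x ^ q ^ e i = 0)
    {i₀ : ι} (hi₀ : ∀ i ≠ i₀, e i % n ≠ e i₀ % n) : c i₀ = 0 := by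
  classical
  have hq := one_lt_of_card_eq_pow hcard
  set P : L[X] := ∑ i, C (c i) * X ^ q ^ (e i % n)
  have hP : P = 0 := by
    refine eq_zero_of_natDegree_lt_card_of_eval_eq_zero P Function.injective_id
      (fun x => by simpa [P, eval_finsetSum, pow_pow_mod_of_card_eq_pow hcard] using h x) ?_
    refine (natDegree_sum_le_of_forall_le _ _ fun i _ => ?_).trans_lt
      (hcard ▸ Nat.pow_lt_pow_right hq (Nat.sub_lt hn one_pos))
    exact (natDegree_C_mul_X_pow_le _ _).trans
      (Nat.pow_le_pow_right hq.le (Nat.le_pred_of_lt (Nat.mod_lt _ hn)))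
  have hcoeff := congrArg (coeff · (q ^ (e i₀ % n))) hP
  simp only [P, finsetSum_coeff, coeff_C_mul_X_pow, coeff_zero,
    (Nat.pow_right_injective hq).eq_iff] at hcoeff
  rwa [Finset.sum_eq_single i₀ (fun i _ hi => if_neg (hi₀ i hi).symm) (by simp),
    if_pos rfl] at hcoeff

end FiniteField

lemma Nat.eq_of_mul_modEq_of_lt {s n t u : ℕ} (hs : Nat.gcd s n = 1)
    (h : s * t ≡ s * u [MOD n]) (ht : t < u + n) (hu : u < t + n) : t = u :=
  (Nat.ModEq.cancel_left_of_coprime (by rwa [Nat.gcd_comm]) h).eq_of_abs_lt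
    (by rw [abs_lt]; omega)

section Gabidulin

variable {L : Type*} [Field L] {q k s : ℕ}

def middleNucleus (q : ℕ) (C : Set (L → L)) : Set (L → L) :=
  {φ | IsQEnd q φ ∧ ∀ f ∈ C, f ∘ φ ∈ C}

def rightNucleus (q : ℕ) (C : Set (L → L)) : Set (L → L) :=
  {φ | IsQEnd q φ ∧ ∀ f ∈ C, φ ∘ f ∈ C}

lemma isQEnd_const_mul (d : L) : IsQEnd q (fun x => d * x) :=
  ⟨fun _ _ => mul_add .., fun _ _ _ => mul_left_comm ..⟩

lemma monomial_mem_genGabidulin (j : Fin k) :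
    (fun x : L => x ^ q ^ (s * j)) ∈ genGabidulin (L := L) q k s := by
  classical
  exact ⟨Pi.single j 1, funext fun x => by simp [Pi.single_apply]⟩

lemma comp_const_mul_mem_genGabidulin {f : L → L} (hf : f ∈ genGabidulin (L := L) q k s)
    (d : L) : f ∘ (fun x => d * x) ∈ genGabidulin (L := L) q k s := by
  obtain ⟨a, rfl⟩ := hf
  exact ⟨fun i => a i * d ^ q ^ (s * i), funext fun x => by simp [mul_pow, mul_assoc]⟩

lemma const_mul_comp_mem_genGabidulin {f : L → L} (hf : f ∈ genGabidulin (L := L) q k s)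
    (d : L) : (fun x => d * x) ∘ f ∈ genGabidulin (L := L) q k s := by
  obtain ⟨a, rfl⟩ := hf
  exact ⟨fun i => d * a i, funext fun x => by simp [Finset.mul_sum, mul_assoc]⟩

lemma eq_const_mul_of_coeff_eq_zero (hk : 0 < k) {a : Fin k → L}
    (ha : ∀ i : Fin k, (i : ℕ) ≠ 0 → a i = 0) :
    (fun x : L => ∑ i : Fin k, a i * x ^ q ^ (s * i)) = fun x => a ⟨0, hk⟩ * x := by
  funext x
  rw [Finset.sum_eq_single ⟨0, hk⟩ (fun i _ hi => by rw [ha i (Fin.val_ne_iff.2 hi), zero_mul])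
    (by simp)]
  simp

lemma coeff_eq_zero_of_shift_mem_genGabidulin [Fintype L] {n : ℕ}
    (hcard : Fintype.card L = q ^ n) (hs : Nat.gcd s n = 1) (hkn : k < n) {a : Fin k → L}
    {i₀ : Fin k} {j : ℕ} (hj : i₀ + j = k)
    (hmem : (fun x : L => ∑ i : Fin k, a i * x ^ q ^ (s * (i + j))) ∈
      genGabidulin (L := L) q k s) :
    a i₀ = 0 := by
  obtain ⟨b, hb⟩ := hmem
  have h : ∀ x : L, ∑ t : Fin k ⊕ Fin k, Sum.elim a (-b) t *
      x ^ q ^ Sum.elim (fun i : Fin k => s * (i + j)) (fun m : Fin k => s * m) t = 0 := by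
    intro x
    simp [Fintype.sum_sum_type, congrFun hb x]
  refine eq_zero_of_sum_mul_pow_pow_eq_zero hcard (by omega) h (i₀ := Sum.inl i₀) ?_
  rintro (i | m) hne hmod
  · have := Nat.eq_of_mul_modEq_of_lt hs hmod (by omega) (by omega)
    exact hne (congrArg Sum.inl (Fin.ext (by omega)))
  · have := Nat.eq_of_mul_modEq_of_lt hs hmod (by omega) (by omega)
    omega

theorem middleNucleus_genGabidulin [Fintype L] {n : ℕ} (hcard : Fintype.card L = q ^ n)
    (hs : Nat.gcd s n = 1) (hk : 0 < k) (hkn : k < n) :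
    middleNucleus q (genGabidulin (L := L) q k s) =
      {φ : L → L | ∃ d : L, φ = fun x => d * x} := by
  ext φ
  constructor
  · rintro ⟨-, hφ⟩
    obtain ⟨a, rfl⟩ : φ ∈ genGabidulin (L := L) q k s := by
      simpa [Function.comp_def] using hφ _ (monomial_mem_genGabidulin ⟨0, hk⟩)
    refine ⟨_, eq_const_mul_of_coeff_eq_zero hk fun i₀ hi₀ => ?_⟩
    have hshift := hφ _ (monomial_mem_genGabidulin ⟨k - i₀, by omega⟩)
    have hq := one_lt_of_card_eq_pow hcard
    refine (pow_eq_zero_iff (pow_ne_zero (s * (k - i₀)) (by omega))).1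
      (coeff_eq_zero_of_shift_mem_genGabidulin hcard hs hkn (a := fun i => a i ^ q ^ _)
        (Nat.add_sub_cancel' i₀.is_lt.le) ?_)
    convert hshift using 1
    funext x
    simp only [Function.comp_apply, sum_pow_pow_of_card_eq_pow hcard (by omega : n ≠ 0),
      mul_pow, ← pow_mul, ← pow_add, mul_add]
  · rintro ⟨d, rfl⟩
    exact ⟨isQEnd_const_mul d, fun f hf => comp_const_mul_mem_genGabidulin hf d⟩

theorem rightNucleus_genGabidulin [Fintype L] {n : ℕ} (hcard : Fintype.card L = q ^ n)
    (hs : Nat.gcd s n = 1) (hk : 0 < k) (hkn : k < n) :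
    rightNucleus q (genGabidulin (L := L) q k s) =
      {φ : L → L | ∃ d : L, φ = fun x => d * x} := by
  ext φ
  constructor
  · rintro ⟨-, hφ⟩
    obtain ⟨a, rfl⟩ : φ ∈ genGabidulin (L := L) q k s := by
      simpa [Function.comp_def] using hφ _ (monomial_mem_genGabidulin ⟨0, hk⟩)
    refine ⟨_, eq_const_mul_of_coeff_eq_zero hk fun i₀ hi₀ => ?_⟩
    have hshift := hφ _ (monomial_mem_genGabidulin ⟨k - i₀, by omega⟩)
    refine coeff_eq_zero_of_shift_mem_genGabidulin hcard hs hkn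
      (Nat.add_sub_cancel' i₀.is_lt.le) ?_
    convert hshift using 1
    funext x
    simp only [Function.comp_apply, ← pow_mul, ← pow_add, mul_add, add_comm]
  · rintro ⟨d, rfl⟩
    exact ⟨isQEnd_const_mul d, fun f hf => const_mul_comp_mem_genGabidulin hf d⟩

end Gabidulin

theorem genGabidulin_nuclei_general {q n k s : ℕ} {L : Type*} [Field L] [Fintype L]
    (hcard : Fintype.card L = q ^ n)
    (hs : Nat.gcd s n = 1) (hk2 : 2 ≤ k) (hkn : k ≤ n - 2) :
    ({φ : L → L | IsQEnd q φ ∧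
        ∀ f ∈ genGabidulin (L := L) q k s, f ∘ φ ∈ genGabidulin (L := L) q k s}
      = {φ : L → L | ∃ d : L, φ = fun x => d * x}) ∧
    ({φ : L → L | IsQEnd q φ ∧
        ∀ f ∈ genGabidulin (L := L) q k s, φ ∘ f ∈ genGabidulin (L := L) q k s}
      = {φ : L → L | ∃ d : L, φ = fun x => d * x}) :=
  ⟨middleNucleus_genGabidulin hcard hs (by omega) (by omega),
    rightNucleus_genGabidulin hcard hs (by omega) (by omega)⟩

/-- For the generalized Gabidulin code `G_{k,s}` with `gcd(s,n)=1` and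
`2 ≤ k ≤ n−2`, both the middle nucleus and the right nucleus consist exactly of the scalar
multiplications `x ↦ dx`, `d ∈ F_{q^n}`; i.e. both are isomorphic to `F_{q^n}`. -/
theorem genGabidulin_nuclei {q n k s : ℕ} {L : Type*} [Field L] [Fintype L]
    (hq : ∃ e : ℕ, 0 < e ∧ q = ringChar L ^ e)
    (hcard : Fintype.card L = q ^ n)
    (hs : Nat.gcd s n = 1) (hk2 : 2 ≤ k) (hkn : k ≤ n - 2) :
    ({φ : L → L | IsQEnd q φ ∧
        ∀ f ∈ genGabidulin (L := L) q k s, f ∘ φ ∈ genGabidulin (L := L) q k s}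
      = {φ : L → L | ∃ d : L, φ = fun x => d * x}) ∧
    ({φ : L → L | IsQEnd q φ ∧
        ∀ f ∈ genGabidulin (L := L) q k s, φ ∘ f ∈ genGabidulin (L := L) q k s}
      = {φ : L → L | ∃ d : L, φ = fun x => d * x}) :=
  genGabidulin_nuclei_general hcard hs hk2 hkn
end
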